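/- arXiv:2210.02983 — 4 statements merged into one kernel-verified Lean document; each statement's English description precedes it below -/
import Mathlib

section
/- Let P, Q, and Pˢ be symmetric positive definite n×n real matrices, F an n×n real matrix, and z ∈ ℝⁿ. Define P⁺ = FPFᵀ + Q, G = PFᵀ(P⁺)⁻¹, 𝒫 = [[P, PFᵀ],[FP, P⁺]] (a 2n×2n block matrix), the 4n×2n block matrix A = [[I,0],[0,I],[0,I],[0,I]], the vector b = (0, z, z, 0) ∈ ℝ⁴ⁿ, and the block-diagonal weight W = blkdiag(𝒫⁻¹, −(P⁺)⁻¹, (Pˢ)⁻¹). Then M = AᵀWA is invertible and the pair δ* = (Gz, 0) ∈ ℝ²ⁿ is the unique solution of the stationarity (normal) equations AᵀWAδ + AᵀWb = 0 of the quadratic cost δ ↦ (1/2)(Aδ + b)ᵀW(Aδ + b). -/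
/-! With `S = P⁻¹ + FᵀQ⁻¹F`, the joint covariance has the information form
`𝒫⁻¹ = [[S, -FᵀQ⁻¹], [-Q⁻¹F, Q⁻¹]]`, and the gain satisfies `SG = FᵀQ⁻¹`, `GᵀS = Q⁻¹F` and
`GᵀSG = Q⁻¹ - (P⁺)⁻¹`. Hence `M = AᵀWA = [[S, -SG], [-GᵀS, GᵀSG + (Pˢ)⁻¹]]`: its Schur complement
is `(Pˢ)⁻¹`, so `M` is invertible, and `M (Gz, z) = (0, (Pˢ)⁻¹z)`. Since `b = A (0, z) - (0, 0, 0, z)`,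
the normal equations read `M (δ + (0, z)) = (0, (Pˢ)⁻¹z)`, which `δ* = (Gz, 0)` solves. -/

open Matrix

namespace Matrix

variable {m n α : Type*} [Fintype m] [Fintype n] [CommRing α]

theorem fromBlocks_gain_mulVec (S : Matrix m m α) (R : Matrix n n α) (G : Matrix m n α)
    (H : Matrix n m α) (z : n → α) :
    fromBlocks S (-(S * G)) (-(H * S)) (H * S * G + R) *ᵥ Sum.elim (G *ᵥ z) z =
      Sum.elim (0 : m → α) (R *ᵥ z) := by
  simp [fromBlocks_mulVec, add_mulVec, neg_mulVec, mulVec_mulVec]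

theorem isUnit_fromBlocks_gain [DecidableEq m] [DecidableEq n] (S : Matrix m m α) [Invertible S]
    {R : Matrix n n α} (hR : IsUnit R) (G : Matrix m n α) (H : Matrix n m α) :
    IsUnit (fromBlocks S (-(S * G)) (-(H * S)) (H * S * G + R)) := by
  rw [isUnit_fromBlocks_iff_of_invertible₁₁]
  convert hR using 1
  simp only [Matrix.neg_mul, Matrix.mul_neg, neg_neg, Matrix.mul_assoc,
    Matrix.mul_invOf_cancel_left, add_sub_cancel_left]

section Stacked

variable [DecidableEq n] {A : Matrix ((n ⊕ n) ⊕ (n ⊕ n)) (n ⊕ n) α}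
  {W : Matrix ((n ⊕ n) ⊕ (n ⊕ n)) ((n ⊕ n) ⊕ (n ⊕ n)) α} {W₁ : Matrix (n ⊕ n) (n ⊕ n) α}
  {W₂ W₃ : Matrix n n α}

theorem transpose_mul_mul_of_stacked (hA : A = fromRows 1 (fromBlocks 0 1 0 1))
    (hW : W = fromBlocks W₁ 0 0 (fromBlocks W₂ 0 0 W₃)) :
    Aᵀ * W * A = W₁ + fromBlocks 0 0 0 (W₂ + W₃) := by
  rw [hA, hW, transpose_fromRows, fromCols_mul_fromBlocks, fromCols_mul_fromRows]
  simp [fromBlocks_transpose, fromBlocks_multiply]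

theorem transpose_mul_mulVec_of_stacked (hA : A = fromRows 1 (fromBlocks 0 1 0 1))
    (hW : W = fromBlocks W₁ 0 0 (fromBlocks W₂ 0 0 W₃)) (z : n → α) :
    (Aᵀ * W) *ᵥ Sum.elim (Sum.elim 0 z) (Sum.elim z 0) =
      (Aᵀ * W * A) *ᵥ Sum.elim 0 z - Sum.elim (0 : n → α) (W₃ *ᵥ z) := by
  rw [transpose_mul_mul_of_stacked hA hW, hA, hW, transpose_fromRows, fromCols_mul_fromBlocks,
    fromCols_mulVec_sumElim]
  simp [fromBlocks_transpose, fromBlocks_multiply, fromBlocks_mulVec, add_mulVec, add_sub_assoc,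
    ← Sum.elim_sub_sub]

end Stacked

theorem PosDef.mul_mul_transpose_add {P Q : Matrix n n ℝ} (hP : P.PosDef) (hQ : Q.PosDef)
    (F : Matrix n n ℝ) : (F * P * Fᵀ + Q).PosDef :=
  PosDef.posSemidef_add (hP.posSemidef.mul_mul_conjTranspose_same F) hQ

theorem PosDef.inv_add_transpose_mul_inv_mul [DecidableEq n] {P Q : Matrix n n ℝ}
    (hP : P.PosDef) (hQ : Q.PosDef) (F : Matrix n n ℝ) : (P⁻¹ + Fᵀ * Q⁻¹ * F).PosDef :=
  hP.inv.add_posSemidef (hQ.inv.posSemidef.conjTranspose_mul_mul_same F)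

end Matrix

namespace Kalman

variable {n α : Type*} [Fintype n] [DecidableEq n] [CommRing α] (P Q F : Matrix n n α)
  [Invertible Q]

theorem inv_jointCovariance [Invertible P] :
    (fromBlocks P (P * Fᵀ) (F * P) (F * P * Fᵀ + Q))⁻¹ =
      fromBlocks (P⁻¹ + Fᵀ * Q⁻¹ * F) (-(Fᵀ * Q⁻¹)) (-(Q⁻¹ * F)) Q⁻¹ := by
  refine inv_eq_right_inv ?_
  rw [fromBlocks_multiply, ← fromBlocks_one]
  congr 1 <;> simp [Matrix.mul_add, Matrix.add_mul, Matrix.mul_assoc]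
  abel

variable [Invertible (F * P * Fᵀ + Q)]

theorem information_mul_gain [Invertible P] :
    (P⁻¹ + Fᵀ * Q⁻¹ * F) * (P * Fᵀ * (F * P * Fᵀ + Q)⁻¹) = Fᵀ * Q⁻¹ := by
  have h : (P⁻¹ + Fᵀ * Q⁻¹ * F) * (P * Fᵀ) = Fᵀ * Q⁻¹ * (F * P * Fᵀ + Q) := by
    simp [Matrix.mul_add, Matrix.add_mul, Matrix.mul_assoc, add_comm]
  rw [← Matrix.mul_assoc, h, Matrix.mul_assoc, mul_inv_of_invertible, Matrix.mul_one]

theorem gain_transpose_mul_information [Invertible P] (hP : P.IsSymm) (hQ : Q.IsSymm) :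
    (P * Fᵀ * (F * P * Fᵀ + Q)⁻¹)ᵀ * (P⁻¹ + Fᵀ * Q⁻¹ * F) = Q⁻¹ * F := by
  have hQ' : (Q⁻¹)ᵀ = Q⁻¹ := by rw [transpose_nonsing_inv, hQ.eq]
  have hP' : (P⁻¹)ᵀ = P⁻¹ := by rw [transpose_nonsing_inv, hP.eq]
  simpa [transpose_mul, transpose_add, hQ', hP', Matrix.mul_assoc] using
    congrArg transpose (information_mul_gain P Q F)

theorem inv_mul_mul_gain :
    Q⁻¹ * F * (P * Fᵀ * (F * P * Fᵀ + Q)⁻¹) = Q⁻¹ - (F * P * Fᵀ + Q)⁻¹ := by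
  have h : Q⁻¹ * F * (P * Fᵀ) = Q⁻¹ * (F * P * Fᵀ + Q) - 1 := by
    simp [Matrix.mul_add, Matrix.mul_assoc]
  rw [← Matrix.mul_assoc, h, Matrix.sub_mul, Matrix.mul_assoc, mul_inv_of_invertible,
    Matrix.mul_one, Matrix.one_mul]

end Kalman

open Kalman

/-- The central computation of the RTS smoother on Lie groups: with
`A = [[I,0],[0,I],[0,I],[0,I]]`, `b = (0, z, z, 0)` and
`W = blkdiag(Pjoint⁻¹, −(P⁺)⁻¹, (Pˢ)⁻¹)`, the matrix `M = AᵀWA` is invertible and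
`δ* = (Gz, 0)` is the unique solution of the normal equations `AᵀWAδ + AᵀWb = 0`. -/
theorem stmt6 {n : ℕ} (P Q Ps F : Matrix (Fin n) (Fin n) ℝ)
    (hP : P.PosDef) (hQ : Q.PosDef) (hPs : Ps.PosDef) (z : Fin n → ℝ) :
    let Pp : Matrix (Fin n) (Fin n) ℝ := F * P * Fᵀ + Q
    let G : Matrix (Fin n) (Fin n) ℝ := P * Fᵀ * Pp⁻¹
    let Pjoint : Matrix (Fin n ⊕ Fin n) (Fin n ⊕ Fin n) ℝ := fromBlocks P (P * Fᵀ) (F * P) Pp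
    let A : Matrix ((Fin n ⊕ Fin n) ⊕ (Fin n ⊕ Fin n)) (Fin n ⊕ Fin n) ℝ :=
      fromRows 1 (fromBlocks 0 1 0 1)
    let b : ((Fin n ⊕ Fin n) ⊕ (Fin n ⊕ Fin n)) → ℝ := Sum.elim (Sum.elim 0 z) (Sum.elim z 0)
    let W : Matrix ((Fin n ⊕ Fin n) ⊕ (Fin n ⊕ Fin n)) ((Fin n ⊕ Fin n) ⊕ (Fin n ⊕ Fin n)) ℝ :=
      fromBlocks Pjoint⁻¹ 0 0 (fromBlocks (-Pp⁻¹) 0 0 Ps⁻¹)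
    let M : Matrix (Fin n ⊕ Fin n) (Fin n ⊕ Fin n) ℝ := Aᵀ * W * A
    let δstar : Fin n ⊕ Fin n → ℝ := Sum.elim (G *ᵥ z) 0
    IsUnit M ∧ M *ᵥ δstar + (Aᵀ * W) *ᵥ b = 0 ∧
      ∀ δ : Fin n ⊕ Fin n → ℝ, M *ᵥ δ + (Aᵀ * W) *ᵥ b = 0 → δ = δstar := by
  intro Pp G Pjoint A b W M δstar
  have hPp : Pp.PosDef := hP.mul_mul_transpose_add hQ F
  set S := P⁻¹ + Fᵀ * Q⁻¹ * F
  have hS : S.PosDef := hP.inv_add_transpose_mul_inv_mul hQ F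
  have := hP.isUnit.invertible
  have := hQ.isUnit.invertible
  have := hPp.isUnit.invertible
  have := hS.isUnit.invertible
  have hM : M = fromBlocks S (-(S * G)) (-(Gᵀ * S)) (Gᵀ * S * G + Ps⁻¹) := by
    have hPsymm := isHermitian_iff_isSymm.mp hP.isHermitian
    have hQsymm := isHermitian_iff_isSymm.mp hQ.isHermitian
    change Aᵀ * W * A = _
    rw [information_mul_gain, gain_transpose_mul_information P Q F hPsymm hQsymm,
      inv_mul_mul_gain, transpose_mul_mul_of_stacked rfl rfl, inv_jointCovariance,
      fromBlocks_add]
    simp only [add_zero]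
    congr 1
    abel
  have hunit : IsUnit M := hM ▸ isUnit_fromBlocks_gain S hPs.inv.isUnit G Gᵀ
  have hstat : M *ᵥ δstar + (Aᵀ * W) *ᵥ b = 0 := by
    rw [transpose_mul_mulVec_of_stacked rfl rfl, add_sub_assoc', ← mulVec_add,
      ← Sum.elim_add_add]
    simp [hM, fromBlocks_gain_mulVec]
  refine ⟨hunit, hstat, fun δ hδ => mulVec_injective_iff_isUnit.mpr hunit ?_⟩
  rw [eq_neg_of_add_eq_zero_left hδ, eq_neg_of_add_eq_zero_left hstat]
end

section
/- Let P, Q, and Pˢ be symmetric positive definite n×n real matrices and F an n×n real matrix. Define P⁺ = FPFᵀ + Q, G = PFᵀ(P⁺)⁻¹, 𝒫 = [[P, PFᵀ],[FP, P⁺]], the 4n×2n block matrix A = [[I,0],[0,I],[0,I],[0,I]], and W = blkdiag(𝒫⁻¹, −(P⁺)⁻¹, (Pˢ)⁻¹). Then M = AᵀWA is invertible and the top-left n×n block of M⁻¹ equals P + G(Pˢ − P⁺)Gᵀ. -/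
/-!
Write `Pp = F P Fᵀ + Q` and `G = P Fᵀ Pp⁻¹`. The joint covariance `[[P, P Fᵀ], [F P, Pp]]` of
`(x, F x + w)` has the information form `[[P⁻¹ + Fᵀ Q⁻¹ F, -Fᵀ Q⁻¹], [-Q⁻¹ F, Q⁻¹]]`, and `AᵀWA`
adds `Ps⁻¹ - Pp⁻¹` to its lower right block. The gain identities
`(P⁻¹ + Fᵀ Q⁻¹ F) G = Fᵀ Q⁻¹` and `Q⁻¹ F G = Q⁻¹ - Pp⁻¹` then show that
`[[P + G (Ps - Pp) Gᵀ, G Ps], [Ps Gᵀ, Ps]]` is a right inverse of `AᵀWA`.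
-/

open Matrix

section

variable {m n K : Type*} [Fintype m] [Fintype n] [DecidableEq m] [DecidableEq n] [CommRing K]

theorem inv_fromBlocks_mul_mul_add {P : Matrix m m K} {Q : Matrix n n K}
    (hP : IsUnit P.det) (hQ : IsUnit Q.det) (F : Matrix n m K) (H : Matrix m n K) :
    (fromBlocks P (P * H) (F * P) (F * P * H + Q))⁻¹ =
      fromBlocks (P⁻¹ + H * Q⁻¹ * F) (-(H * Q⁻¹)) (-(Q⁻¹ * F)) Q⁻¹ := by
  apply inv_eq_right_inv
  rw [fromBlocks_multiply, ← fromBlocks_one]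
  congr 1 <;> simp only [Matrix.mul_add, Matrix.add_mul, Matrix.mul_neg, Matrix.mul_assoc,
    mul_nonsing_inv _ hP, mul_nonsing_inv _ hQ, mul_nonsing_inv_cancel_left _ _ hQ,
    Matrix.mul_one] <;> abel

theorem fromRows_transpose_mul_fromBlocks_mul_fromRows
    (J : Matrix (m ⊕ n) (m ⊕ n) K) (X Y : Matrix n n K) :
    let A : Matrix ((m ⊕ n) ⊕ (n ⊕ n)) (m ⊕ n) K := fromRows 1 (fromBlocks 0 1 0 1)
    Aᵀ * fromBlocks J 0 0 (fromBlocks X 0 0 Y) * A = J + fromBlocks 0 0 0 (X + Y) := by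
  simp [transpose_fromRows, fromBlocks_transpose, fromCols_mul_fromBlocks,
    fromCols_mul_fromRows, fromBlocks_multiply]

theorem fromBlocks_mul_fromBlocks_smoothed_eq_one {P : Matrix m m K} {Q S : Matrix n n K}
    (F : Matrix n m K) (H : Matrix m n K) (hP : IsUnit P.det) (hQ : IsUnit Q.det)
    (hPp : IsUnit (F * P * H + Q).det) (hS : IsUnit S.det) :
    let Pp := F * P * H + Q
    let G := P * H * Pp⁻¹
    let G' := Pp⁻¹ * F * P
    fromBlocks (P⁻¹ + H * Q⁻¹ * F) (-(H * Q⁻¹)) (-(Q⁻¹ * F)) (Q⁻¹ - Pp⁻¹ + S⁻¹) *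
        fromBlocks (P + G * (S - Pp) * G') (G * S) (S * G') S = 1 := by
  intro Pp G G'
  replace hPp : IsUnit Pp.det := hPp
  set a := P⁻¹ + H * Q⁻¹ * F
  have haP : a * P = 1 + H * Q⁻¹ * F * P := by
    simp only [a, Matrix.add_mul, nonsing_inv_mul _ hP]
  have haG : a * G = H * Q⁻¹ := by
    have : a * P * H = H * Q⁻¹ * Pp := by
      simp only [haP, Pp, Matrix.add_mul, Matrix.one_mul, Matrix.mul_add, Matrix.mul_assoc,
        nonsing_inv_mul _ hQ, Matrix.mul_one]
      abel
    simp only [G, ← Matrix.mul_assoc, this, mul_nonsing_inv_cancel_right _ _ hPp]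
  have hcG : Q⁻¹ * F * G = Q⁻¹ - Pp⁻¹ := by
    have : Q⁻¹ * F * P * H = Q⁻¹ * Pp - 1 := by
      simp only [Pp, Matrix.mul_add, nonsing_inv_mul _ hQ, Matrix.mul_assoc]
      abel
    simp only [G, ← Matrix.mul_assoc, this, Matrix.sub_mul, mul_nonsing_inv_cancel_right _ _ hPp,
      Matrix.one_mul]
  rw [fromBlocks_multiply, ← fromBlocks_one]
  congr 1 <;> simp only [Matrix.mul_add, Matrix.mul_sub, Matrix.add_mul, Matrix.sub_mul,
    Matrix.neg_mul, ← Matrix.mul_assoc, haG, haP, hcG]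
  · simp only [G', Matrix.mul_assoc, mul_nonsing_inv_cancel_left _ _ hPp]
    abel
  · abel
  · simp only [G', Matrix.mul_assoc, mul_nonsing_inv_cancel_left _ _ hPp,
      nonsing_inv_mul_cancel_left _ _ hS]
    abel
  · rw [nonsing_inv_mul _ hS]
    abel

end

/-- The smoothed covariance recursion of the RTS smoother on Lie groups: with
`A = [[I,0],[0,I],[0,I],[0,I]]` and `W = blkdiag(Pjoint⁻¹, −(P⁺)⁻¹, (Pˢ)⁻¹)`, the matrix
`M = AᵀWA` is invertible and the top-left `n×n` block of `M⁻¹` equals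
`P + G(Pˢ − P⁺)Gᵀ`. -/
theorem stmt7 {n : ℕ} (P Q Ps F : Matrix (Fin n) (Fin n) ℝ)
    (hP : P.PosDef) (hQ : Q.PosDef) (hPs : Ps.PosDef) :
    let Pp : Matrix (Fin n) (Fin n) ℝ := F * P * Fᵀ + Q
    let G : Matrix (Fin n) (Fin n) ℝ := P * Fᵀ * Pp⁻¹
    let Pjoint : Matrix (Fin n ⊕ Fin n) (Fin n ⊕ Fin n) ℝ := fromBlocks P (P * Fᵀ) (F * P) Pp
    let A : Matrix ((Fin n ⊕ Fin n) ⊕ (Fin n ⊕ Fin n)) (Fin n ⊕ Fin n) ℝ :=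
      fromRows 1 (fromBlocks 0 1 0 1)
    let W : Matrix ((Fin n ⊕ Fin n) ⊕ (Fin n ⊕ Fin n)) ((Fin n ⊕ Fin n) ⊕ (Fin n ⊕ Fin n)) ℝ :=
      fromBlocks Pjoint⁻¹ 0 0 (fromBlocks (-Pp⁻¹) 0 0 Ps⁻¹)
    let M : Matrix (Fin n ⊕ Fin n) (Fin n ⊕ Fin n) ℝ := Aᵀ * W * A
    IsUnit M ∧ M⁻¹.toBlocks₁₁ = P + G * (Ps - Pp) * Gᵀ := by
  intro Pp G Pjoint A W M
  have hPp : Pp.PosDef := by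
    refine PosDef.posSemidef_add ?_ hQ
    simpa using hP.posSemidef.mul_mul_conjTranspose_same F
  have hPu := hP.det_pos.ne'.isUnit
  have hQu := hQ.det_pos.ne'.isUnit
  have hM : M = fromBlocks (P⁻¹ + Fᵀ * Q⁻¹ * F) (-(Fᵀ * Q⁻¹)) (-(Q⁻¹ * F))
      (Q⁻¹ - Pp⁻¹ + Ps⁻¹) := by
    rw [show M = _ from fromRows_transpose_mul_fromBlocks_mul_fromRows _ _ _,
      inv_fromBlocks_mul_mul_add hPu hQu, fromBlocks_add]
    simp only [add_zero, sub_eq_add_neg, add_assoc]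
  have hGt : Gᵀ = Pp⁻¹ * F * P := by
    simp only [G, transpose_mul, transpose_nonsing_inv, transpose_transpose, Matrix.mul_assoc,
      (isHermitian_iff_isSymm.mp hP.isHermitian).eq, (isHermitian_iff_isSymm.mp hPp.isHermitian).eq]
  have hMN : M * fromBlocks (P + G * (Ps - Pp) * Gᵀ) (G * Ps) (Ps * Gᵀ) Ps = 1 := by
    rw [hM, hGt]
    exact fromBlocks_mul_fromBlocks_smoothed_eq_one F Fᵀ hPu hQu hPp.det_pos.ne'.isUnit
      hPs.det_pos.ne'.isUnit
  refine ⟨(isUnit_iff_isUnit_det M).mpr (isUnit_det_of_right_inverse hMN), ?_⟩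
  rw [inv_eq_right_inv hMN, toBlocks_fromBlocks₁₁]
end

section
/- Let C : ℝ → ℝ^{3×3} and v, p : ℝ → ℝ³ be differentiable at t, with C(t) a rotation matrix (C(t)ᵀC(t) = I and det C(t) = 1). Let ω_ie, gᵉ ∈ ℝ³ be constant vectors and ω(t), f(t) ∈ ℝ³, and suppose the navigation equations hold at t: C′(t) = C(t)[ω(t)]× − [ω_ie]×C(t), p′(t) = v(t), and v′(t) = C(t)f(t) − 2[ω_ie]×v(t) + gᵉ. Let X(t) be the 5×5 block matrix [[C(t), v(t), p(t)],[0₂ₓ₃, I₂]]. Then X(t) is invertible and X(t)⁻¹X′(t) equals the 5×5 matrix whose top-left 3×3 block is [ω(t) − C(t)ᵀω_ie]×, whose fourth column (top three entries) is f(t) − 2C(t)ᵀ[ω_ie]×v(t) + C(t)ᵀgᵉ, whose fifth column (top three entries) is C(t)ᵀv(t), and whose bottom two rows are zero. -/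
open Matrix

/-- The skew-symmetric matrix `[w]×` of `w ∈ ℝ³`, satisfying `[w]× u = w × u`. -/
def skew (w : Fin 3 → ℝ) : Matrix (Fin 3) (Fin 3) ℝ :=
  !![0, -w 2, w 1; w 2, 0, -w 0; -w 1, w 0, 0]

/-- The 5×5 block matrix `[[S, a, b],[0₂ₓ₃, D]]` whose fourth and fifth columns have top
entries `a` and `b`. -/
def blk (S : Matrix (Fin 3) (Fin 3) ℝ) (a b : Fin 3 → ℝ) (D : Matrix (Fin 2) (Fin 2) ℝ) :
    Matrix (Fin 3 ⊕ Fin 2) (Fin 3 ⊕ Fin 2) ℝ :=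
  fromBlocks S (Matrix.of fun i j => if j = 0 then a i else b i) 0 D

theorem skew_conj (c : Matrix (Fin 3) (Fin 3) ℝ) (h : cᵀ * c = 1) (hd : c.det = 1) (w : Fin 3 → ℝ) :
    cᵀ * skew w * c = skew (cᵀ *ᵥ w) := by
  have hadj : cᵀ = c.adjugate := by
    calc cᵀ = cᵀ * (c * c.adjugate) := by rw [Matrix.mul_adjugate, hd]; simp
    _ = (cᵀ * c) * c.adjugate := by rw [Matrix.mul_assoc]
    _ = c.adjugate := by rw [h, Matrix.one_mul]
  rw [Matrix.adjugate_fin_three] at hadj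
  have e : ∀ i j : Fin 3, cᵀ i j =
      !![c 1 1 * c 2 2 - c 1 2 * c 2 1, -(c 0 1 * c 2 2) + c 0 2 * c 2 1, c 0 1 * c 1 2 - c 0 2 * c 1 1;
        -(c 1 0 * c 2 2) + c 1 2 * c 2 0, c 0 0 * c 2 2 - c 0 2 * c 2 0, -(c 0 0 * c 1 2) + c 0 2 * c 1 0;
        c 1 0 * c 2 1 - c 1 1 * c 2 0, -(c 0 0 * c 2 1) + c 0 1 * c 2 0, c 0 0 * c 1 1 - c 0 1 * c 1 0] i j :=
    fun i j => congrFun (congrFun hadj i) j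
  have e00 := e 0 0; have e01 := e 0 1; have e02 := e 0 2
  have e10 := e 1 0; have e11 := e 1 1; have e12 := e 1 2
  have e20 := e 2 0; have e21 := e 2 1; have e22 := e 2 2
  simp at e00 e01 e02 e10 e11 e12 e20 e21 e22
  ext i j
  fin_cases i <;> fin_cases j <;>
    simp [Matrix.mul_apply, Matrix.mulVec, dotProduct, Fin.sum_univ_three, skew]
  · ring
  · linear_combination w 2 * e22 + w 1 * e21 + w 0 * e20
  · linear_combination -(w 2) * e12 - w 1 * e11 - w 0 * e10
  · linear_combination -(w 2) * e22 - w 1 * e21 - w 0 * e20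
  · ring
  · linear_combination w 2 * e02 + w 1 * e01 + w 0 * e00
  · linear_combination w 2 * e12 + w 1 * e11 + w 0 * e10
  · linear_combination -(w 2) * e02 - w 1 * e01 - w 0 * e00
  · ring

theorem skew_sub (a b : Fin 3 → ℝ) : skew (a - b) = skew a - skew b := by
  ext i j; fin_cases i <;> fin_cases j <;> simp [skew] <;> ring

theorem blk_mul (S S' : Matrix (Fin 3) (Fin 3) ℝ) (a b a' b' : Fin 3 → ℝ)
    (D D' : Matrix (Fin 2) (Fin 2) ℝ) :
    blk S a b D * blk S' a' b' D' =
      blk (S * S') (S *ᵥ a' + D' 0 0 • a + D' 1 0 • b) (S *ᵥ b' + D' 0 1 • a + D' 1 1 • b) (D * D') := by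
  ext i j
  rcases i with i | i <;> rcases j with j | j <;>
    [skip; fin_cases j; skip; fin_cases j] <;>
    simp [blk, Matrix.fromBlocks, Matrix.mul_apply, Matrix.mulVec, dotProduct,
      Fintype.sum_sum_type, Fin.sum_univ_two, Fin.sum_univ_three] <;> ring

/-- The strap-down navigation equations embedded in `SE₂(3)`: if `C, v, p` satisfy
`C′ = C[ω]× − [ω_ie]×C`, `p′ = v`, `v′ = Cf − 2[ω_ie]×v + gᵉ` at `t`, then
`X = [[C,v,p],[0,I₂]]` is invertible and `X⁻¹X′` is the Lie-algebra element with
top-left block `[ω − Cᵀω_ie]×`, fourth column `f − 2Cᵀ[ω_ie]×v + Cᵀgᵉ`, fifth column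
`Cᵀv`, and zero bottom rows. -/
theorem stmt9 (C : ℝ → Matrix (Fin 3) (Fin 3) ℝ) (v p : ℝ → Fin 3 → ℝ) (t : ℝ)
    (Cd : Matrix (Fin 3) (Fin 3) ℝ) (vd pd : Fin 3 → ℝ)
    (hCdiff : ∀ i j, HasDerivAt (fun s => C s i j) (Cd i j) t)
    (hvdiff : ∀ i, HasDerivAt (fun s => v s i) (vd i) t)
    (hpdiff : ∀ i, HasDerivAt (fun s => p s i) (pd i) t)
    (hrot : (C t)ᵀ * C t = 1) (hdet : (C t).det = 1)
    (ωie gE ω f : Fin 3 → ℝ)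
    (hC : Cd = C t * skew ω - skew ωie * C t)
    (hp : pd = v t)
    (hv : vd = (C t) *ᵥ f - (2 : ℝ) • (skew ωie *ᵥ v t) + gE) :
    IsUnit (blk (C t) (v t) (p t) 1) ∧
      (blk (C t) (v t) (p t) 1)⁻¹ * blk Cd vd pd 0 =
        blk (skew (ω - (C t)ᵀ *ᵥ ωie))
          (f - (2 : ℝ) • ((C t)ᵀ *ᵥ (skew ωie *ᵥ v t)) + (C t)ᵀ *ᵥ gE)
          ((C t)ᵀ *ᵥ v t) 0 := by
  set c := C t with hc
  have hcc : c * cᵀ = 1 := mul_eq_one_comm.mp hrot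
  have hmul : blk c (v t) (p t) 1 * blk cᵀ (-(cᵀ *ᵥ v t)) (-(cᵀ *ᵥ p t)) 1 = 1 := by
    rw [blk_mul]
    have h1 : c *ᵥ (-(cᵀ *ᵥ v t)) + (1 : Matrix (Fin 2) (Fin 2) ℝ) 0 0 • v t
        + (1 : Matrix (Fin 2) (Fin 2) ℝ) 1 0 • p t = 0 := by
      simp [Matrix.mulVec_neg, Matrix.mulVec_mulVec, hcc, Matrix.one_apply]
    have h2 : c *ᵥ (-(cᵀ *ᵥ p t)) + (1 : Matrix (Fin 2) (Fin 2) ℝ) 0 1 • v t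
        + (1 : Matrix (Fin 2) (Fin 2) ℝ) 1 1 • p t = 0 := by
      simp [Matrix.mulVec_neg, Matrix.mulVec_mulVec, hcc, Matrix.one_apply]
    rw [h1, h2, hcc, Matrix.mul_one]
    unfold blk
    have hz : (Matrix.of fun (i : Fin 3) (j : Fin 2) =>
        if j = 0 then (0 : Fin 3 → ℝ) i else (0 : Fin 3 → ℝ) i)
        = (0 : Matrix (Fin 3) (Fin 2) ℝ) := by
      ext i j; simp
    rw [hz, Matrix.fromBlocks_one]
  have hunit : IsUnit (blk c (v t) (p t) 1) :=
    (Matrix.isUnit_iff_isUnit_det _).mpr (Matrix.isUnit_det_of_right_inverse hmul)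
  refine ⟨hunit, ?_⟩
  have hinv : (blk c (v t) (p t) 1)⁻¹ = blk cᵀ (-(cᵀ *ᵥ v t)) (-(cᵀ *ᵥ p t)) 1 :=
    Matrix.inv_eq_right_inv hmul
  rw [hinv, blk_mul]
  have hCd : cᵀ * Cd = skew (ω - cᵀ *ᵥ ωie) := by
    rw [hC, Matrix.mul_sub, ← Matrix.mul_assoc, hrot, Matrix.one_mul, ← Matrix.mul_assoc,
      skew_conj c hrot hdet, skew_sub]
  have hvd : cᵀ *ᵥ vd + (0 : Matrix (Fin 2) (Fin 2) ℝ) 0 0 • (-(cᵀ *ᵥ v t))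
      + (0 : Matrix (Fin 2) (Fin 2) ℝ) 1 0 • (-(cᵀ *ᵥ p t))
      = f - (2 : ℝ) • (cᵀ *ᵥ (skew ωie *ᵥ v t)) + cᵀ *ᵥ gE := by
    simp only [Matrix.zero_apply, zero_smul, add_zero, hv]
    rw [Matrix.mulVec_add, Matrix.mulVec_sub, Matrix.mulVec_smul, Matrix.mulVec_mulVec, hrot,
      Matrix.one_mulVec]
  have hpd : cᵀ *ᵥ pd + (0 : Matrix (Fin 2) (Fin 2) ℝ) 0 1 • (-(cᵀ *ᵥ v t))
      + (0 : Matrix (Fin 2) (Fin 2) ℝ) 1 1 • (-(cᵀ *ᵥ p t)) = cᵀ *ᵥ v t := by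
    simp [hp]
  rw [hCd, hvd, hpd, Matrix.one_mul]
end

section
/- Let n ≥ 1 and let X : ℝ → ℝ^{n×n} be differentiable at t with derivative X′(t). Define ad_A(B) = AB − BA for square matrices. Then the series Σ_{k≥0} ((−1)ᵏ/(k+1)!) ad_{X(t)}ᵏ(X′(t)) converges absolutely, and the map s ↦ exp(X(s)) is differentiable at t with derivative exp(X(t)) · Σ_{k≥0} ((−1)ᵏ/(k+1)!) ad_{X(t)}ᵏ(X′(t)). -/
open Matrix

attribute [local instance] Matrix.linftyOpNormedAddCommGroup Matrix.linftyOpNormedRing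
  Matrix.linftyOpNormedAlgebra

/-- Iterated adjoint `ad_Aᵏ(B)` where `ad_A(B) = AB − BA`. -/
def adIter {n : ℕ} (A : Matrix (Fin n) (Fin n) ℝ) (B : Matrix (Fin n) (Fin n) ℝ) (k : ℕ) :
    Matrix (Fin n) (Fin n) ℝ :=
  (fun M => A * M - M * A)^[k] B

/-!
Write `L_a`, `R_a` for left and right multiplication by `a`; they commute. Differentiating the
exponential series term by term gives `D exp(a) = ∑_N ((N+1)!)⁻¹ ∑_{i+j=N} L_a^i R_a^j`.
For commuting `x, y` in a Banach algebra, the Cauchy product of `exp x` with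
`∑_m ((m+1)!)⁻¹ (y - x)^m` is `∑_N ((N+1)!)⁻¹ ∑_{i+j=N} x^i y^j`, since
`∑_{i+j=N} x^i (x + v)^j = ∑_{i+j=N} C(N+1, j+1) x^i v^j` (Pascal's rule and induction on `N`).
Taking `x = L_a`, `y = R_a` gives `D exp(a) = L_{exp a} ∘ ∑_m ((m+1)!)⁻¹ (R_a - L_a)^m`, and
`(R_a - L_a)^m = (-ad_a)^m`; the chain rule finishes.
-/

open Finset NormedSpace ContinuousLinearMap
open scoped Nat

theorem Commute.sum_antidiagonal_pow_mul_add_pow {R : Type*} [Semiring R] {a b : R}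
    (h : Commute a b) (N : ℕ) :
    ∑ p ∈ antidiagonal N, a ^ p.1 * (a + b) ^ p.2 =
      ∑ p ∈ antidiagonal N, (N + 1).choose (p.2 + 1) • (a ^ p.1 * b ^ p.2) := by
  induction N with
  | zero => simp
  | succ N ih =>
    have binom : (a + b) ^ (N + 1) =
        ∑ p ∈ antidiagonal (N + 1), (N + 1).choose p.2 • (a ^ p.1 * b ^ p.2) := by
      rw [h.add_pow']
      refine sum_congr rfl fun p hp => ?_
      rw [Nat.choose_symm_of_eq_add (mem_antidiagonal.mp hp).symm]
    simp only [Nat.choose_succ_succ' (N + 1), add_smul, sum_add_distrib, ← binom]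
    rw [Nat.sum_antidiagonal_succ, Nat.sum_antidiagonal_succ, Nat.choose_succ_self, zero_smul,
      zero_add, pow_zero, one_mul]
    simp only [pow_succ' a, mul_assoc, ← mul_sum, ih]
    simp only [mul_sum, mul_smul_comm]

theorem inv_factorial_mul_choose {K : Type*} [Field K] [CharZero K] (i j : ℕ) :
    ((i + j + 1)! : K)⁻¹ * (i + j + 1).choose (j + 1) = (i ! : K)⁻¹ * ((j + 1)! : K)⁻¹ := by
  have : ((i + (j + 1))! : K) ≠ 0 := Nat.cast_ne_zero.2 (Nat.factorial_ne_zero _)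
  rw [add_assoc, ← Nat.choose_symm_add, Nat.cast_add_choose]
  field_simp

theorem ContinuousLinearMap.opNorm_pow_le {𝕜 E : Type*} [NontriviallyNormedField 𝕜]
    [NormedAddCommGroup E] [NormedSpace 𝕜 E] (f : E →L[𝕜] E) (n : ℕ) : ‖f ^ n‖ ≤ ‖f‖ ^ n := by
  rcases n with _ | n
  · rw [pow_zero, pow_zero]
    exact norm_id_le
  · exact norm_pow_le' f n.succ_pos

section BanachAlgebra

variable {𝕂 𝔸 : Type*} [RCLike 𝕂] [NormedRing 𝔸] [NormedAlgebra 𝕂 𝔸]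

theorem summable_norm_inv_factorial_succ_smul_pow (b : 𝔸) :
    Summable fun m : ℕ => ‖((m + 1)! : 𝕂)⁻¹ • b ^ m‖ := by
  refine Summable.of_norm_bounded_eventually_nat (Real.summable_pow_div_factorial ‖b‖) ?_
  filter_upwards [eventually_norm_pow_le b] with m hm
  rw [norm_norm, norm_smul, norm_inv, RCLike.norm_natCast, div_eq_inv_mul]
  gcongr
  exact m.le_succ

theorem Commute.tsum_inv_factorial_smul_sum_antidiagonal_eq_exp_mul [CompleteSpace 𝔸] {a b : 𝔸}
    (h : Commute a b) :
    ∑' N : ℕ, ((N + 1)! : 𝕂)⁻¹ • ∑ p ∈ antidiagonal N, a ^ p.1 * b ^ p.2 =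
      NormedSpace.exp a * ∑' m : ℕ, ((m + 1)! : 𝕂)⁻¹ • (b - a) ^ m := by
  rw [exp_eq_tsum 𝕂, tsum_mul_tsum_eq_tsum_sum_antidiagonal_of_summable_norm
    (norm_expSeries_summable' a) (summable_norm_inv_factorial_succ_smul_pow (b - a))]
  refine tsum_congr fun N => ?_
  have hsplit := (h.sub_right (Commute.refl a)).sum_antidiagonal_pow_mul_add_pow N
  rw [add_sub_cancel] at hsplit
  rw [hsplit, smul_sum]
  refine sum_congr rfl fun p hp => ?_
  rw [smul_mul_smul_comm, ← Nat.cast_smul_eq_nsmul 𝕂, smul_smul, ← mem_antidiagonal.mp hp,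
    inv_factorial_mul_choose]

namespace ContinuousLinearMap

theorem mul_pow_apply (a b : 𝔸) (n : ℕ) : (mul 𝕂 𝔸 a ^ n) b = a ^ n * b := by
  induction n with
  | zero => simp
  | succ n ih => rw [pow_succ', mul_apply_eq_comp, ih, mul_apply', pow_succ', mul_assoc]

theorem flip_mul_pow_apply (a b : 𝔸) (n : ℕ) : ((mul 𝕂 𝔸).flip a ^ n) b = b * a ^ n := by
  induction n with
  | zero => simp
  | succ n ih => rw [pow_succ', mul_apply_eq_comp, ih, flip_apply, mul_apply', pow_succ, mul_assoc]

theorem commute_mul_flip_mul (a b : 𝔸) : Commute (mul 𝕂 𝔸 a) ((mul 𝕂 𝔸).flip b) :=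
  ext fun c => (mul_assoc a c b).symm

theorem opNorm_flip_mul_apply_le (a : 𝔸) : ‖(mul 𝕂 𝔸).flip a‖ ≤ ‖a‖ :=
  opNorm_le_bound _ (norm_nonneg a) fun b => (norm_mul_le b a).trans_eq (mul_comm _ _)

theorem exp_mul_apply [CompleteSpace 𝔸] (a b : 𝔸) : exp (mul 𝕂 𝔸 a) b = exp a * b := by
  let lmul : 𝔸 →+* (𝔸 →L[𝕂] 𝔸) := { NonUnitalAlgHom.Lmul 𝕂 𝔸 with map_one' := ext one_mul }
  have h := map_exp_of_mem_ball (𝕂 := 𝕂) lmul (mul 𝕂 𝔸).continuous a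
    (by simp [expSeries_radius_eq_top])
  exact (congrArg (· b) h).symm

end ContinuousLinearMap

theorem hasFDerivAt_pow_succ (N : ℕ) (a : 𝔸) :
    HasFDerivAt (fun x : 𝔸 => x ^ (N + 1))
      (∑ p ∈ antidiagonal N, mul 𝕂 𝔸 a ^ p.1 * (mul 𝕂 𝔸).flip a ^ p.2) a := by
  refine (hasFDerivAt_pow' (N + 1)).congr_fderiv (ext fun b => ?_)
  rw [← Nat.sum_antidiagonal_swap, Nat.sum_antidiagonal_eq_sum_range_succ_mk]
  simp only [_root_.sum_apply, mul_apply_eq_comp]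
  refine sum_congr rfl fun i _ => ?_
  simp only [Nat.pred_succ, Prod.swap, mul_pow_apply, flip_mul_pow_apply]
  simp [mul_assoc]

theorem norm_sum_antidiagonal_mul_pow_mul_flip_mul_pow_le (N : ℕ) (a : 𝔸) :
    ‖∑ p ∈ antidiagonal N, mul 𝕂 𝔸 a ^ p.1 * (mul 𝕂 𝔸).flip a ^ p.2‖ ≤ (N + 1) * ‖a‖ ^ N := by
  calc _ ≤ ∑ p ∈ antidiagonal N, ‖mul 𝕂 𝔸 a ^ p.1 * (mul 𝕂 𝔸).flip a ^ p.2‖ := norm_sum_le _ _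
    _ ≤ ∑ _p ∈ antidiagonal N, ‖a‖ ^ N := by
      refine sum_le_sum fun p hp => ?_
      rw [← mem_antidiagonal.mp hp, pow_add]
      refine (norm_mul_le _ _).trans (mul_le_mul ?_ ?_ (norm_nonneg _) (by positivity))
      · exact (opNorm_pow_le _ _).trans (pow_le_pow_left₀ (norm_nonneg _)
          (opNorm_mul_apply_le 𝕂 𝔸 a) _)
      · exact (opNorm_pow_le _ _).trans (pow_le_pow_left₀ (norm_nonneg _)
          (opNorm_flip_mul_apply_le a) _)
    _ = (N + 1) * ‖a‖ ^ N := by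
      rw [sum_const, Finset.Nat.card_antidiagonal, nsmul_eq_mul]
      push_cast
      ring

theorem exp_eq_one_add_tsum [CompleteSpace 𝔸] (a : 𝔸) :
    exp a = 1 + ∑' N : ℕ, ((N + 1)! : 𝕂)⁻¹ • a ^ (N + 1) := by
  rw [exp_eq_tsum 𝕂]
  beta_reduce
  rw [(expSeries_summable' a).tsum_eq_zero_add]
  simp

theorem hasFDerivAt_exp' [CompleteSpace 𝔸] (a : 𝔸) :
    HasFDerivAt exp
      (∑' N : ℕ, ((N + 1)! : 𝕂)⁻¹ • ∑ p ∈ antidiagonal N,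
        mul 𝕂 𝔸 a ^ p.1 * (mul 𝕂 𝔸).flip a ^ p.2) a := by
  let _ : NormedSpace ℝ 𝔸 := NormedSpace.restrictScalars ℝ 𝕂 𝔸
  set r := ‖a‖ + 1
  have hr : 0 < r := by positivity
  have hbound : ∀ N, ∀ x ∈ Metric.ball (0 : 𝔸) r, ‖((N + 1)! : 𝕂)⁻¹ • ∑ p ∈ antidiagonal N,
      mul 𝕂 𝔸 x ^ p.1 * (mul 𝕂 𝔸).flip x ^ p.2‖ ≤ r ^ N / N ! := by
    intro N x hx
    rw [norm_smul, norm_inv, RCLike.norm_natCast]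
    calc _ ≤ ((N + 1)! : ℝ)⁻¹ * ((N + 1) * r ^ N) := by
          gcongr
          refine (norm_sum_antidiagonal_mul_pow_mul_flip_mul_pow_le N x).trans ?_
          gcongr
          exact (mem_ball_zero_iff.mp hx).le
      _ = r ^ N / N ! := by
          rw [Nat.factorial_succ]
          push_cast
          field_simp
  have key := hasFDerivAt_tsum_of_isPreconnected (Real.summable_pow_div_factorial r)
    Metric.isOpen_ball (convex_ball 0 r).isPreconnected
    (fun N x _ => (hasFDerivAt_pow_succ N x).const_smul ((N + 1)! : 𝕂)⁻¹) hbound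
    (Metric.mem_ball_self hr) (by simp) (mem_ball_zero_iff.mpr (show ‖a‖ < r by simp [r]))
  rw [funext (exp_eq_one_add_tsum (𝕂 := 𝕂))]
  exact key.const_add 1

end BanachAlgebra

theorem adIter_succ {n : ℕ} (A B : Matrix (Fin n) (Fin n) ℝ) (k : ℕ) :
    adIter A B (k + 1) = A * adIter A B k - adIter A B k * A :=
  Function.iterate_succ_apply' _ _ _

theorem flip_mul_sub_mul_pow_apply_eq_adIter {n : ℕ} (A B : Matrix (Fin n) (Fin n) ℝ) (k : ℕ) :
    (((mul ℝ _).flip A - mul ℝ _ A) ^ k) B = (-1 : ℝ) ^ k • adIter A B k := by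
  induction k with
  | zero => simp [adIter]
  | succ k ih =>
    rw [pow_succ', mul_apply_eq_comp, ih, map_smul, adIter_succ, pow_succ, mul_smul,
      neg_one_smul, neg_sub]
    rfl

theorem stmt14_general {n : ℕ} (X : ℝ → Matrix (Fin n) (Fin n) ℝ)
    (X' : Matrix (Fin n) (Fin n) ℝ) (t : ℝ) (hX : HasDerivAt X X' t) :
    Summable (fun k : ℕ =>
      ‖((-1 : ℝ) ^ k / (Nat.factorial (k + 1) : ℝ)) • adIter (X t) X' k‖) ∧
    HasDerivAt (fun s => NormedSpace.exp (X s))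
      (NormedSpace.exp (X t) *
        ∑' k : ℕ, ((-1 : ℝ) ^ k / (Nat.factorial (k + 1) : ℝ)) • adIter (X t) X' k) t := by
  set L := mul ℝ (Matrix (Fin n) (Fin n) ℝ) (X t)
  set R := (mul ℝ (Matrix (Fin n) (Fin n) ℝ)).flip (X t)
  have hterm : ∀ k : ℕ, ((-1 : ℝ) ^ k / ((k + 1)! : ℝ)) • adIter (X t) X' k =
      (((k + 1)! : ℝ)⁻¹ • (R - L) ^ k) X' := by
    intro k
    rw [_root_.smul_apply, flip_mul_sub_mul_pow_apply_eq_adIter, smul_smul, div_eq_inv_mul]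
  have hsum := summable_norm_inv_factorial_succ_smul_pow (𝕂 := ℝ) (R - L)
  refine ⟨?_, ?_⟩
  · refine (hsum.mul_right ‖X'‖).of_nonneg_of_le (fun k => norm_nonneg _) fun k => ?_
    rw [hterm]
    exact le_opNorm _ _
  · have hD := (hasFDerivAt_exp' (𝕂 := ℝ) (X t)).comp_hasDerivAt t hX
    rw [(commute_mul_flip_mul (X t) (X t)).tsum_inv_factorial_smul_sum_antidiagonal_eq_exp_mul,
      mul_apply_eq_comp, exp_mul_apply] at hD
    have hsum_apply := (apply ℝ _ X').map_tsum hsum.of_norm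
    simp only [apply_apply] at hsum_apply
    refine hD.congr_deriv (congrArg _ ?_)
    rw [hsum_apply]
    exact tsum_congr fun k => (hterm k).symm

/-- Left-trivialized derivative of the matrix exponential: if `X` is differentiable at `t`,
then the right-Jacobian series `Σ_k ((−1)ᵏ/(k+1)!) ad_{X(t)}ᵏ(X′(t))` converges absolutely
and `d/ds exp(X(s))|_{s=t} = exp(X(t)) · Σ_k ((−1)ᵏ/(k+1)!) ad_{X(t)}ᵏ(X′(t))`. -/
theorem stmt14 {n : ℕ} (hn : 1 ≤ n) (X : ℝ → Matrix (Fin n) (Fin n) ℝ)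
    (X' : Matrix (Fin n) (Fin n) ℝ) (t : ℝ) (hX : HasDerivAt X X' t) :
    Summable (fun k : ℕ =>
      ‖((-1 : ℝ) ^ k / (Nat.factorial (k + 1) : ℝ)) • adIter (X t) X' k‖) ∧
    HasDerivAt (fun s => NormedSpace.exp (X s))
      (NormedSpace.exp (X t) *
        ∑' k : ℕ, ((-1 : ℝ) ^ k / (Nat.factorial (k + 1) : ℝ)) • adIter (X t) X' k) t :=
  stmt14_general X X' t hX
end
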